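/- Let 𝔸 and ℂ be the families of AXp's and CXp's of an explanation problem with monotone WAXp/WCXp predicates related by WAXp(Z) ↔ ¬WCXp(F \ Z). Then a minimum-cardinality hitting set of ℂ is an AXp of minimum cardinality, and conversely every minimum-cardinality AXp is a minimum-cardinality hitting set of ℂ. -/
import Mathlib

open Classical in
/-- Any set satisfying a predicate contains a minimal subset satisfying it. -/
lemma exists_minimal_subset {F : Type} [DecidableEq F] [Fintype F]
    (Q : Finset F → Prop) (S : Finset F) (hS : Q S) :
    ∃ C, C ⊆ S ∧ Q C ∧ ∀ C' ⊂ C, ¬ Q C' := by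
  classical
  let T : Finset (Finset F) := S.powerset.filter (fun C => Q C)
  have hT : S ∈ T := by simp [T, hS]
  obtain ⟨C, hCT, hmin⟩ := T.exists_min_image Finset.card ⟨S, hT⟩
  simp only [T, Finset.mem_filter, Finset.mem_powerset] at hCT
  refine ⟨C, hCT.1, hCT.2, ?_⟩
  intro C' hC' hQC'
  have hC'T : C' ∈ T := by
    simp only [T, Finset.mem_filter, Finset.mem_powerset]
    exact ⟨hC'.subset.trans hCT.1, hQC'⟩
  exact absurd (hmin C' hC'T) (not_le.mpr (Finset.card_lt_card hC'))

lemma hits_iff_P {F : Type} [DecidableEq F] [Fintype F]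
    (P Q : Finset F → Prop)
    (hdual : ∀ Z : Finset F, P Z ↔ ¬ Q (Finset.univ \ Z))
    (hQmono : ∀ ⦃Z Z' : Finset F⦄, Z ⊆ Z' → Q Z → Q Z')
    (H : Finset F) :
    (∀ C : Finset F, (Q C ∧ ∀ C' ⊂ C, ¬ Q C') → (H ∩ C).Nonempty) ↔ P H := by
  constructor
  · intro hhit
    by_contra hP
    have hQ : Q (Finset.univ \ H) := not_not.mp (fun h => hP ((hdual H).mpr h))
    obtain ⟨C, hCsub, hQC, hCmin⟩ := exists_minimal_subset Q _ hQ
    obtain ⟨x, hx⟩ := hhit C ⟨hQC, hCmin⟩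
    rw [Finset.mem_inter] at hx
    exact (Finset.mem_sdiff.mp (hCsub hx.2)).2 hx.1
  · intro hP C ⟨hQC, _⟩
    by_contra hempty
    rw [Finset.not_nonempty_iff_eq_empty] at hempty
    have hsub : C ⊆ Finset.univ \ H := by
      intro x hx
      simp only [Finset.mem_sdiff, Finset.mem_univ, true_and]
      intro hxH
      have : x ∈ H ∩ C := Finset.mem_inter.mpr ⟨hxH, hx⟩
      simp [hempty] at this
    exact (hdual H).mp hP (hQmono hsub hQC)

/-- A minimum-cardinality hitting set of the family ℂ of CXp's is a
minimum-cardinality AXp, and vice-versa. AXp's (resp. CXp's) are the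
subset-minimal sets satisfying the monotone dual predicates P (resp. Q). -/
theorem min_hitting_set_iff_smallest_axp {F : Type} [DecidableEq F] [Fintype F]
    (P Q : Finset F → Prop)
    (hdual : ∀ Z : Finset F, P Z ↔ ¬ Q (Finset.univ \ Z))
    (hPmono : ∀ ⦃Z Z' : Finset F⦄, Z ⊆ Z' → P Z → P Z')
    (hQmono : ∀ ⦃Z Z' : Finset F⦄, Z ⊆ Z' → Q Z → Q Z')
    (hP0 : ¬ P ∅) (hPF : P Finset.univ) (hQ0 : ¬ Q ∅) (hQF : Q Finset.univ)
    (H : Finset F) :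
    ((∀ C : Finset F, (Q C ∧ ∀ C' ⊂ C, ¬ Q C') → (H ∩ C).Nonempty) ∧
      (∀ H' : Finset F,
        (∀ C : Finset F, (Q C ∧ ∀ C' ⊂ C, ¬ Q C') → (H' ∩ C).Nonempty) →
        H.card ≤ H'.card)) ↔
    ((P H ∧ ∀ H' ⊂ H, ¬ P H') ∧
      (∀ A : Finset F, (P A ∧ ∀ A' ⊂ A, ¬ P A') → H.card ≤ A.card)) := by
  have key := fun S => hits_iff_P P Q hdual hQmono S
  constructor
  · rintro ⟨hhit, hmin⟩
    have hPH : P H := (key H).mp hhit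
    refine ⟨⟨hPH, ?_⟩, ?_⟩
    · intro H' hH' hPH'
      have := hmin H' ((key H').mpr hPH')
      exact absurd this (not_le.mpr (Finset.card_lt_card hH'))
    · intro A ⟨hPA, _⟩
      exact hmin A ((key A).mpr hPA)
  · rintro ⟨⟨hPH, hHmin⟩, hsmall⟩
    refine ⟨(key H).mpr hPH, ?_⟩
    intro H' hhit'
    have hPH' : P H' := (key H').mp hhit'
    obtain ⟨A, hAsub, hPA, hAmin⟩ := exists_minimal_subset P H' hPH'
    exact le_trans (hsmall A ⟨hPA, hAmin⟩) (Finset.card_le_card hAsub)
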